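/- Let u₀, 𝒜 ∈ ℝ, ε ∈ (0, 1) and r₀ > 0. Suppose u, f : [r₀, ∞) → ℝ are twice differentiable with u(r) = 1 + u₀/r + O(r^{−2+ε}), u′(r) = −u₀/r² + O(r^{−3+ε}), f′(r) = r/√(1 + r²) + 𝒜/r + O(r^{−2+ε}), f″(r) = (1 + r²)^{−3/2} − 𝒜/r² + O(r^{−3+ε}) as r → ∞, and suppose V : [r₀, ∞) → ℝ satisfies V(r) = O(r^{ε}). Define π(r) = [u(r)(f″(r) + (r/(1 + r²)) f′(r)) + 2 u′(r) f′(r)] · [1 + u(r)²((1 + r²) f′(r)² + V(r))]^{−1/2}. Then π(r) = 1/r² − (2u₀ + 𝒜)/r³ + O(r^{−4+ε}) as r → ∞. -/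

import Mathlib

/-!
Write `N` for the numerator of `π` and `D = 1 + u²((1 + r²) f′² + V)` for its radicand. Inserting
the expansions of `u, u′, f′, f″` gives `N = 1/r - u₀/r² + O(r^{-3+ε})` and
`D = r² + 2(u₀ + 𝒜) r + O(r^ε)`. For `g = 1/r - b/r²` with `b = u₀ + 𝒜` one has
`g² D - 1 = O(r^{-2+ε})`, and `|D^{-1/2} - g| ≤ |g² D - 1| D^{-1/2}` turns this into
`D^{-1/2} = g + O(r^{-3+ε})`; multiplying the two expansions gives the claim. Most explicit model
terms have the form `r^m h(1/r)` with `h` continuous at `0`, hence are `O(r^m)`.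
-/

open Filter Topology Asymptotics Real

namespace Asymptotics

theorem isBigO_rpow_atTop_iff {g : ℝ → ℝ} {k : ℝ} :
    g =O[atTop] (· ^ k) ↔ ∃ C R, ∀ r ≥ R, |g r| ≤ C * r ^ k := by
  rw [isBigO_iff]
  constructor
  · rintro ⟨C, hC⟩
    obtain ⟨R, hR⟩ := eventually_atTop.1 (hC.and (eventually_ge_atTop 0))
    refine ⟨C, R, fun r hr => ?_⟩
    obtain ⟨h, hr₀⟩ := hR r hr
    rwa [norm_eq_abs, norm_of_nonneg (rpow_nonneg hr₀ k)] at h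
  · rintro ⟨C, R, h⟩
    refine ⟨C, ?_⟩
    filter_upwards [eventually_ge_atTop R, eventually_ge_atTop 0] with r hR hr₀
    rw [norm_eq_abs, norm_of_nonneg (rpow_nonneg hr₀ k)]
    exact h r hR

theorem rpow_isBigO_rpow_atTop {p q : ℝ} (h : p ≤ q) : (· ^ p : ℝ → ℝ) =O[atTop] (· ^ q) :=
  Eventually.isBigO <| by
    filter_upwards [eventually_ge_atTop 1] with r hr
    rw [norm_of_nonneg (rpow_nonneg (zero_le_one.trans hr) p)]
    exact rpow_le_rpow_of_exponent_le hr h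

theorem rpow_isLittleO_rpow_atTop {p q : ℝ} (h : p < q) :
    (· ^ p : ℝ → ℝ) =o[atTop] (· ^ q) := by
  refine (isLittleO_iff_tendsto' ?_).2 ?_
  · filter_upwards [eventually_gt_atTop 0] with r hr h0
    exact absurd h0 (rpow_pos_of_pos hr q).ne'
  · refine (tendsto_rpow_neg_atTop (sub_pos.2 h)).congr' ?_
    filter_upwards [eventually_gt_atTop 0] with r hr
    rw [← rpow_sub hr, neg_sub]

theorem isBigO_rpow_of_eq_zpow_mul {f g : ℝ → ℝ} (m : ℤ) {k : ℝ} (hg : ContinuousAt g 0)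
    (hk : (m : ℝ) ≤ k) (hf : ∀ r > 0, f r = r ^ m * g r⁻¹) : f =O[atTop] (· ^ k) := by
  have hbdd : (fun r : ℝ => g r⁻¹) =O[atTop] (fun _ => (1 : ℝ)) :=
    (hg.tendsto.comp tendsto_inv_atTop_zero).isBigO_one ℝ
  have hprod : (fun r : ℝ => r ^ (m : ℝ) * g r⁻¹) =O[atTop] (· ^ (m : ℝ)) := by
    simpa using (isBigO_refl (· ^ (m : ℝ)) atTop).mul hbdd
  refine (hprod.trans (rpow_isBigO_rpow_atTop hk)).congr' ?_ EventuallyEq.rfl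
  filter_upwards [eventually_gt_atTop 0] with r hr
  rw [hf r hr, rpow_intCast]

theorem isBigO_const_rpow_atTop (c : ℝ) {k : ℝ} (hk : 0 ≤ k) :
    (fun _ : ℝ => c) =O[atTop] (· ^ k) :=
  isBigO_rpow_of_eq_zpow_mul 0 (g := fun _ => c) continuousAt_const (by simpa) fun r _ => by simp

theorem inv_isBigO_rpow_neg_one : (fun r : ℝ => r⁻¹) =O[atTop] (· ^ (-1 : ℝ)) :=
  isBigO_rpow_of_eq_zpow_mul (-1) (g := fun _ => 1) continuousAt_const (by simp)
    fun r _ => by simp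

theorem isBigO_rpow_mul_sub_mul {F G F₀ G₀ : ℝ → ℝ} {p q p' q' k : ℝ}
    (hF₀ : F₀ =O[atTop] (· ^ p)) (hG₀ : G₀ =O[atTop] (· ^ q))
    (hF : (fun r => F r - F₀ r) =O[atTop] (· ^ p'))
    (hG : (fun r => G r - G₀ r) =O[atTop] (· ^ q'))
    (h₁ : p' + q ≤ k) (h₂ : p + q' ≤ k) (h₃ : p' + q' ≤ k) :
    (fun r => F r * G r - F₀ r * G₀ r) =O[atTop] (· ^ k) :=
  (((hF.mul_atTop_rpow_of_isBigO_rpow _ _ _ hG₀ h₁).add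
    (hF₀.mul_atTop_rpow_of_isBigO_rpow _ _ _ hG h₂)).add
    (hF.mul_atTop_rpow_of_isBigO_rpow _ _ _ hG h₃)).congr_left fun r => by
      simp only [Pi.mul_apply]; ring

end Asymptotics

theorem abs_inv_sqrt_sub_le {D g : ℝ} (hD : 0 < D) (hg : 0 ≤ g) :
    |(√D)⁻¹ - g| ≤ |g ^ 2 * D - 1| * (√D)⁻¹ := by
  have hs : 0 < √D := sqrt_pos.2 hD
  have hfactor : (√D)⁻¹ - g = (1 - g * √D) * (√D)⁻¹ := by field_simp
  have hdefect : g ^ 2 * D - 1 = -((1 - g * √D) * (1 + g * √D)) := by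
    linear_combination g ^ 2 * (sq_sqrt hD.le).symm
  rw [hfactor, hdefect, abs_mul, abs_neg, abs_mul, abs_of_pos (inv_pos.2 hs)]
  gcongr
  refine le_mul_of_one_le_right (abs_nonneg _) ?_
  rw [abs_of_nonneg (by positivity)]
  linarith [mul_nonneg hg hs.le]

theorem sqrt_one_add_sq_sub_self_isBigO :
    (fun r : ℝ => √(1 + r ^ 2) - r) =O[atTop] (· ^ (-1 : ℝ)) :=
  Eventually.isBigO <| by
    filter_upwards [eventually_gt_atTop 0] with r hr
    have hlt : r < √(1 + r ^ 2) := (lt_sqrt hr.le).2 (by linarith)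
    have hsq : √(1 + r ^ 2) ^ 2 = 1 + r ^ 2 := sq_sqrt (by positivity)
    rw [norm_of_nonneg (by linarith), rpow_neg_one, ← one_div, le_div_iff₀ hr]
    nlinarith

theorem inv_sqrt_one_add_sq_isBigO :
    (fun r : ℝ => (√(1 + r ^ 2))⁻¹) =O[atTop] (· ^ (-1 : ℝ)) :=
  Eventually.isBigO <| by
    filter_upwards [eventually_gt_atTop 0] with r hr
    rw [norm_of_nonneg (by positivity), rpow_neg_one]
    exact inv_anti₀ hr ((lt_sqrt hr.le).2 (by linarith)).le

theorem sqrt_one_add_sq_isBigO : (fun r : ℝ => √(1 + r ^ 2)) =O[atTop] (· ^ (1 : ℝ)) := by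
  have hid : (fun r : ℝ => r) =O[atTop] (· ^ (1 : ℝ)) :=
    isBigO_rpow_of_eq_zpow_mul 1 (g := fun _ => 1) continuousAt_const (by simp) fun r _ => by simp
  exact ((sqrt_one_add_sq_sub_self_isBigO.trans (rpow_isBigO_rpow_atTop (by norm_num))).add
    hid).congr_left fun r => by simp

theorem hyperbolic_deriv_sub_one_isBigO (𝒜 : ℝ) :
    (fun r : ℝ => r / √(1 + r ^ 2) + 𝒜 / r - 1) =O[atTop] (· ^ (-1 : ℝ)) := by
  have hrat := sqrt_one_add_sq_sub_self_isBigO.mul_atTop_rpow_of_isBigO_rpow _ _ (-1)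
    inv_sqrt_one_add_sq_isBigO (by norm_num)
  refine (hrat.neg_left.add (isBigO_rpow_of_eq_zpow_mul (-1) (g := fun _ => 𝒜) continuousAt_const
    (by norm_num) fun r _ => rfl)).congr' ?_ EventuallyEq.rfl
  filter_upwards [eventually_gt_atTop 0] with r hr
  have hs : 0 < √(1 + r ^ 2) := sqrt_pos.2 (by positivity)
  simp only [Pi.mul_apply]
  field_simp
  ring

theorem sqrt_mul_hyperbolic_deriv_sub_isBigO (𝒜 : ℝ) :
    (fun r : ℝ => √(1 + r ^ 2) * (r / √(1 + r ^ 2) + 𝒜 / r) - (r + 𝒜))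
      =O[atTop] (· ^ (-2 : ℝ)) := by
  refine ((sqrt_one_add_sq_sub_self_isBigO.mul_atTop_rpow_of_isBigO_rpow _ _ _
    inv_isBigO_rpow_neg_one (by norm_num)).const_mul_left 𝒜).congr' ?_ EventuallyEq.rfl
  filter_upwards [eventually_gt_atTop 0] with r hr
  have hs : 0 < √(1 + r ^ 2) := sqrt_pos.2 (by positivity)
  simp only [Pi.mul_apply]
  field_simp
  ring

theorem hyperbolic_hessian_sub_inv_isBigO (𝒜 : ℝ) :
    (fun r : ℝ => (1 + r ^ 2) ^ (-(3 : ℝ) / 2) - 𝒜 / r ^ 2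
        + r / (1 + r ^ 2) * (r / √(1 + r ^ 2) + 𝒜 / r) - 1 / r) =O[atTop] (· ^ (-3 : ℝ)) := by
  have hsqrt := (sqrt_one_add_sq_sub_self_isBigO.mul_atTop_rpow_of_isBigO_rpow _ _ (-2)
    inv_isBigO_rpow_neg_one (by norm_num)).mul_atTop_rpow_of_isBigO_rpow _ _ (-3)
    inv_sqrt_one_add_sq_isBigO (by norm_num)
  have hcorr := isBigO_rpow_of_eq_zpow_mul (-4) (g := fun t => -𝒜 / (1 + t ^ 2))
    (by fun_prop (disch := positivity))
    (k := -3) (by norm_num) fun r _ => rfl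
  refine (hsqrt.neg_left.add hcorr).congr' ?_ EventuallyEq.rfl
  filter_upwards [eventually_gt_atTop 0] with r hr
  have h32 : (1 + r ^ 2) ^ (-(3 : ℝ) / 2) = (√(1 + r ^ 2) ^ 3)⁻¹ := by
    rw [rpow_div_two_eq_sqrt _ (by positivity), rpow_neg (sqrt_nonneg _)]
    norm_cast
  have hs : 0 < √(1 + r ^ 2) := sqrt_pos.2 (by positivity)
  have hsq : √(1 + r ^ 2) ^ 2 = 1 + r ^ 2 := sq_sqrt (by positivity)
  simp only [Pi.mul_apply, h32]
  -- the model terms add up to `1/√(1+r²) - 𝒜/(r²(1+r²))`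
  generalize √(1 + r ^ 2) = s at *
  field_simp
  grind

theorem one_add_div_isBigO (a : ℝ) : (fun r : ℝ => 1 + a / r) =O[atTop] (· ^ (0 : ℝ)) :=
  isBigO_rpow_of_eq_zpow_mul 0 (g := fun t => 1 + a * t) (by fun_prop) (by simp)
    fun r _ => by simp [div_eq_mul_inv]

theorem one_div_sub_div_sq_isBigO (a : ℝ) :
    (fun r : ℝ => 1 / r - a / r ^ 2) =O[atTop] (· ^ (-1 : ℝ)) :=
  isBigO_rpow_of_eq_zpow_mul (-1) (g := fun t => 1 - a * t) (by fun_prop) (by simp)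
    fun r hr => by field_simp

theorem eventually_half_le_sqrt {D : ℝ → ℝ} {b ε : ℝ} (hε : ε < 2)
    (hD : (fun r => D r - (r ^ 2 + 2 * b * r)) =O[atTop] (· ^ ε)) :
    ∀ᶠ r in atTop, r / 2 ≤ √(D r) := by
  have hlin : (fun r : ℝ => 2 * b * r) =O[atTop] (· ^ (1 : ℝ)) :=
    isBigO_rpow_of_eq_zpow_mul 1 (g := fun _ => 2 * b) continuousAt_const (by simp)
      fun r _ => by rw [zpow_one]; ring
  have hsmall : (fun r => D r - r ^ 2) =o[atTop] (· ^ (2 : ℝ)) :=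
    ((hD.trans_isLittleO (rpow_isLittleO_rpow_atTop hε)).add
      (hlin.trans_isLittleO (rpow_isLittleO_rpow_atTop one_lt_two))).congr_left fun r => by ring
  filter_upwards [hsmall.bound (by norm_num : (0 : ℝ) < 3 / 4), eventually_gt_atTop 0]
    with r hr hr₀
  rw [norm_of_nonneg (rpow_nonneg hr₀.le _), rpow_two, norm_eq_abs, abs_le] at hr
  exact le_sqrt_of_sq_le (by linarith)

theorem inv_sqrt_sub_isBigO {D : ℝ → ℝ} {b ε : ℝ} (hε₀ : 0 ≤ ε) (hε₂ : ε < 2)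
    (hD : (fun r => D r - (r ^ 2 + 2 * b * r)) =O[atTop] (· ^ ε)) :
    (fun r => (√(D r))⁻¹ - (1 / r - b / r ^ 2)) =O[atTop] (· ^ (-3 + ε)) := by
  have hlarge := eventually_half_le_sqrt hε₂ hD
  have hinv : (fun r => (√(D r))⁻¹) =O[atTop] (· ^ (-1 : ℝ)) := by
    refine IsBigO.of_bound 2 ?_
    filter_upwards [hlarge, eventually_gt_atTop 0] with r hr hr₀
    rw [norm_of_nonneg (by positivity), norm_of_nonneg (by positivity), rpow_neg_one]
    calc (√(D r))⁻¹ ≤ (r / 2)⁻¹ := inv_anti₀ (by positivity) hr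
      _ = 2 * r⁻¹ := by rw [inv_div]; ring
  have happrox_sq : (fun r : ℝ => (1 / r - b / r ^ 2) ^ 2) =O[atTop] (· ^ (-2 : ℝ)) :=
    ((one_div_sub_div_sq_isBigO b).mul_atTop_rpow_of_isBigO_rpow _ _ _
      (one_div_sub_div_sq_isBigO b) (by norm_num)).congr_left fun r => (sq _).symm
  have hdefect : (fun r => (1 / r - b / r ^ 2) ^ 2 * D r - 1) =O[atTop] (· ^ (-2 + ε)) :=
    ((happrox_sq.mul_atTop_rpow_of_isBigO_rpow _ _ _ hD le_rfl).add
      (isBigO_rpow_of_eq_zpow_mul (-2) (g := fun t => -3 * b ^ 2 + 2 * b ^ 3 * t)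
        (f := fun r => (1 / r - b / r ^ 2) ^ 2 * (r ^ 2 + 2 * b * r) - 1)
        (by fun_prop) (by simpa) fun r hr => by field_simp; ring)).congr_left
      fun r => by simp only [Pi.mul_apply]; ring
  refine IsBigO.trans ?_ (hdefect.mul_atTop_rpow_of_isBigO_rpow _ _ _ hinv (by linarith))
  refine IsBigO.of_bound' ?_
  filter_upwards [hlarge, eventually_gt_atTop b, eventually_gt_atTop 0] with r hr hrb hr₀
  have happrox_nonneg : 0 ≤ 1 / r - b / r ^ 2 := by
    rw [div_sub_div _ _ hr₀.ne' (by positivity)]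
    exact div_nonneg (by nlinarith) (by positivity)
  have hD_pos : 0 < √(D r) := (by positivity : 0 < r / 2).trans_le hr
  rw [Pi.mul_apply, norm_mul, norm_eq_abs, norm_eq_abs, norm_eq_abs,
    abs_of_pos (inv_pos.2 hD_pos)]
  exact abs_inv_sqrt_sub_le (sqrt_pos.1 hD_pos) happrox_nonneg

section JangGraph

variable {u₀ 𝒜 ε : ℝ} {u u' f' f'' V : ℝ → ℝ}

theorem radial_hessian_sub_inv_isBigO (hε : 0 ≤ ε)
    (hf' : (fun r => f' r - (r / √(1 + r ^ 2) + 𝒜 / r)) =O[atTop] (· ^ (-2 + ε)))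
    (hf'' : (fun r => f'' r - ((1 + r ^ 2) ^ (-(3 : ℝ) / 2) - 𝒜 / r ^ 2))
      =O[atTop] (· ^ (-3 + ε))) :
    (fun r => f'' r + r / (1 + r ^ 2) * f' r - 1 / r) =O[atTop] (· ^ (-3 + ε)) := by
  have hΓ : (fun r : ℝ => r / (1 + r ^ 2)) =O[atTop] (· ^ (-1 : ℝ)) :=
    isBigO_rpow_of_eq_zpow_mul (-1) (g := fun t => (1 + t ^ 2)⁻¹)
      (by fun_prop (disch := positivity)) (by simp) fun r hr => by field_simp; ring
  have hmodel := (hyperbolic_hessian_sub_inv_isBigO 𝒜).trans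
    (rpow_isBigO_rpow_atTop (by linarith : (-3 : ℝ) ≤ -3 + ε))
  exact ((hf''.add (hΓ.mul_atTop_rpow_of_isBigO_rpow _ _ _ hf' (by linarith))).add
    hmodel).congr_left fun r => by simp only [Pi.mul_apply]; ring

theorem jang_numerator_sub_isBigO (hε₀ : 0 ≤ ε) (hε₂ : ε ≤ 2)
    (hu : (fun r => u r - (1 + u₀ / r)) =O[atTop] (· ^ (-2 + ε)))
    (hu' : (fun r => u' r - (-u₀ / r ^ 2)) =O[atTop] (· ^ (-3 + ε)))
    (hf' : (fun r => f' r - (r / √(1 + r ^ 2) + 𝒜 / r)) =O[atTop] (· ^ (-2 + ε)))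
    (hf'' : (fun r => f'' r - ((1 + r ^ 2) ^ (-(3 : ℝ) / 2) - 𝒜 / r ^ 2))
      =O[atTop] (· ^ (-3 + ε))) :
    (fun r => u r * (f'' r + r / (1 + r ^ 2) * f' r) + 2 * u' r * f' r - (1 / r - u₀ / r ^ 2))
      =O[atTop] (· ^ (-3 + ε)) := by
  have hu'₀ : (fun r : ℝ => -u₀ / r ^ 2) =O[atTop] (· ^ (-2 : ℝ)) :=
    isBigO_rpow_of_eq_zpow_mul (-2) (g := fun _ => -u₀) continuousAt_const (by simp)
      fun r _ => by simp [div_eq_mul_inv, mul_comm]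
  have hinv : (fun r : ℝ => 1 / r) =O[atTop] (· ^ (-1 : ℝ)) :=
    inv_isBigO_rpow_neg_one.congr_left fun r => (one_div r).symm
  have hderiv_sub_one := hyperbolic_deriv_sub_one_isBigO 𝒜
  have hderiv : (fun r : ℝ => r / √(1 + r ^ 2) + 𝒜 / r) =O[atTop] (· ^ (0 : ℝ)) :=
    ((hderiv_sub_one.trans (rpow_isBigO_rpow_atTop (by norm_num))).add
      (isBigO_const_rpow_atTop 1 le_rfl)).congr_left fun r => by ring
  have hwarp := isBigO_rpow_mul_sub_mul (k := -3 + ε) (one_add_div_isBigO u₀) hinv hu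
    (radial_hessian_sub_inv_isBigO hε₀ hf' hf'') (by linarith) (by linarith) (by linarith)
  have hgrad := isBigO_rpow_mul_sub_mul (k := -3 + ε) hu'₀ hderiv hu' hf' (by linarith)
    (by linarith) (by linarith)
  have hcross := (hu'₀.mul_atTop_rpow_of_isBigO_rpow _ _ _ hderiv_sub_one le_rfl).trans
    (rpow_isBigO_rpow_atTop (by linarith : (-2 : ℝ) + -1 ≤ -3 + ε))
  exact ((hwarp.add (hgrad.const_mul_left 2)).add (hcross.const_mul_left 2)).congr_left
    fun r => by simp only [Pi.mul_apply]; ring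

theorem jang_denominator_sub_isBigO (hε₀ : 0 ≤ ε) (hε₂ : ε ≤ 2)
    (hu : (fun r => u r - (1 + u₀ / r)) =O[atTop] (· ^ (-2 + ε)))
    (hf' : (fun r => f' r - (r / √(1 + r ^ 2) + 𝒜 / r)) =O[atTop] (· ^ (-2 + ε)))
    (hV : V =O[atTop] (· ^ ε)) :
    (fun r => 1 + u r ^ 2 * ((1 + r ^ 2) * f' r ^ 2 + V r) - (r ^ 2 + 2 * (u₀ + 𝒜) * r))
      =O[atTop] (· ^ ε) := by
  have hu₀ := one_add_div_isBigO u₀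
  have hlin : (fun r : ℝ => r + 𝒜) =O[atTop] (· ^ (1 : ℝ)) :=
    isBigO_rpow_of_eq_zpow_mul 1 (g := fun t => 1 + 𝒜 * t) (by fun_prop) (by simp)
      fun r hr => by field_simp
  have hgrad : (fun r => √(1 + r ^ 2) * f' r - (r + 𝒜)) =O[atTop] (· ^ (-1 + ε)) :=
    ((sqrt_one_add_sq_isBigO.mul_atTop_rpow_of_isBigO_rpow _ _ _ hf' (by linarith)).add
      ((sqrt_mul_hyperbolic_deriv_sub_isBigO 𝒜).trans (rpow_isBigO_rpow_atTop (by linarith))))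
      |>.congr_left fun r => by simp only [Pi.mul_apply]; ring
  have hgrad_sq : (fun r => ((1 + r ^ 2) * f' r ^ 2 + V r) - (r + 𝒜) ^ 2) =O[atTop] (· ^ ε) :=
    ((isBigO_rpow_mul_sub_mul (k := ε) hlin hlin hgrad hgrad (by linarith) (by linarith)
      (by linarith)).add hV).congr_left fun r => by
        linear_combination f' r ^ 2 * sq_sqrt (by positivity : (0 : ℝ) ≤ 1 + r ^ 2)
  have hu_sq : (fun r => u r ^ 2 - (1 + u₀ / r) ^ 2) =O[atTop] (· ^ (-2 + ε)) :=
    (isBigO_rpow_mul_sub_mul hu₀ hu₀ hu hu (by linarith) (by linarith) (by linarith)).congr_left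
      fun r => by ring
  have hu₀_sq : (fun r : ℝ => (1 + u₀ / r) ^ 2) =O[atTop] (· ^ (0 : ℝ)) :=
    (hu₀.mul_atTop_rpow_of_isBigO_rpow _ _ _ hu₀ (by norm_num)).congr_left fun r => (sq _).symm
  have hlin_sq : (fun r : ℝ => (r + 𝒜) ^ 2) =O[atTop] (· ^ (2 : ℝ)) :=
    (hlin.mul_atTop_rpow_of_isBigO_rpow _ _ _ hlin (by norm_num)).congr_left fun r => (sq _).symm
  have hmain := isBigO_rpow_mul_sub_mul (k := ε) hu₀_sq hlin_sq hu_sq hgrad_sq (by linarith)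
    (by linarith) (by linarith)
  have hmodel : (fun r : ℝ => 1 + (1 + u₀ / r) ^ 2 * (r + 𝒜) ^ 2 - (r ^ 2 + 2 * (u₀ + 𝒜) * r))
      =O[atTop] (· ^ ε) :=
    isBigO_rpow_of_eq_zpow_mul 0 (by fun_prop) (by simpa)
      (g := fun t => 1 + (u₀ + 𝒜) ^ 2 + 2 * (u₀ * 𝒜) + 2 * (u₀ + 𝒜) * (u₀ * 𝒜) * t
        + (u₀ * 𝒜) ^ 2 * t ^ 2)
      fun r hr => by field_simp; ring
  exact (hmain.add hmodel).congr_left fun r => by ring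

end JangGraph

theorem stmt_7_general (u₀ 𝒜 ε : ℝ) (hε : ε ∈ Set.Ioo (0 : ℝ) 1)
    (u u' f' f'' V : ℝ → ℝ)
    (hu : ∃ C R, ∀ r ≥ R, |u r - (1 + u₀ / r)| ≤ C * r ^ (-2 + ε))
    (hu' : ∃ C R, ∀ r ≥ R, |u' r - (-u₀ / r ^ 2)| ≤ C * r ^ (-3 + ε))
    (hf' : ∃ C R, ∀ r ≥ R,
      |f' r - (r / Real.sqrt (1 + r ^ 2) + 𝒜 / r)| ≤ C * r ^ (-2 + ε))
    (hf'' : ∃ C R, ∀ r ≥ R,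
      |f'' r - ((1 + r ^ 2) ^ (-(3 : ℝ) / 2) - 𝒜 / r ^ 2)| ≤ C * r ^ (-3 + ε))
    (hV : ∃ C R, ∀ r ≥ R, |V r| ≤ C * r ^ ε) :
    ∃ C R, ∀ r ≥ R,
      |(u r * (f'' r + (r / (1 + r ^ 2)) * f' r) + 2 * u' r * f' r) *
          (Real.sqrt (1 + u r ^ 2 * ((1 + r ^ 2) * f' r ^ 2 + V r)))⁻¹ -
        (1 / r ^ 2 - (2 * u₀ + 𝒜) / r ^ 3)| ≤ C * r ^ (-4 + ε) := by
  obtain ⟨hε₀, hε₁⟩ := hε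
  have hnum := jang_numerator_sub_isBigO hε₀.le (by linarith) (isBigO_rpow_atTop_iff.2 hu)
    (isBigO_rpow_atTop_iff.2 hu') (isBigO_rpow_atTop_iff.2 hf') (isBigO_rpow_atTop_iff.2 hf'')
  have hden := jang_denominator_sub_isBigO hε₀.le (by linarith) (isBigO_rpow_atTop_iff.2 hu)
    (isBigO_rpow_atTop_iff.2 hf') (isBigO_rpow_atTop_iff.2 hV)
  have hmodel : (fun r : ℝ => (1 / r - u₀ / r ^ 2) * (1 / r - (u₀ + 𝒜) / r ^ 2)
      - (1 / r ^ 2 - (2 * u₀ + 𝒜) / r ^ 3)) =O[atTop] (· ^ (-4 + ε)) :=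
    isBigO_rpow_of_eq_zpow_mul (-4) (g := fun _ => u₀ * (u₀ + 𝒜)) continuousAt_const
      (by push_cast; linarith) fun r hr => by field_simp; ring
  refine isBigO_rpow_atTop_iff.1 (((isBigO_rpow_mul_sub_mul (k := -4 + ε)
    (one_div_sub_div_sq_isBigO u₀) (one_div_sub_div_sq_isBigO (u₀ + 𝒜)) hnum
    (inv_sqrt_sub_isBigO hε₀.le (by linarith) hden) (by linarith) (by linarith)
    (by linarith)).add hmodel).congr_left fun r => by ring)

/-- Expansion (07): π_rr = 1/r² − (2u₀ + 𝒜)/r³ + O(r^{−4+ε}) for the radial-radial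
component π(r) = [u(f″ + (r/(1+r²))f′) + 2u′f′]·(1 + u²((1+r²)f′² + V))^{−1/2}
of the second fundamental form of the Jang graph. -/
theorem stmt_7 (u₀ 𝒜 ε r₀ : ℝ) (hε : ε ∈ Set.Ioo (0 : ℝ) 1) (hr₀ : 0 < r₀)
    (u u' f f' f'' V : ℝ → ℝ)
    (hud : ∀ r ≥ r₀, HasDerivAt u (u' r) r)
    (hfd : ∀ r ≥ r₀, HasDerivAt f (f' r) r)
    (hfd' : ∀ r ≥ r₀, HasDerivAt f' (f'' r) r)
    (hu : ∃ C R, ∀ r ≥ R, |u r - (1 + u₀ / r)| ≤ C * r ^ (-2 + ε))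
    (hu' : ∃ C R, ∀ r ≥ R, |u' r - (-u₀ / r ^ 2)| ≤ C * r ^ (-3 + ε))
    (hf' : ∃ C R, ∀ r ≥ R,
      |f' r - (r / Real.sqrt (1 + r ^ 2) + 𝒜 / r)| ≤ C * r ^ (-2 + ε))
    (hf'' : ∃ C R, ∀ r ≥ R,
      |f'' r - ((1 + r ^ 2) ^ (-(3 : ℝ) / 2) - 𝒜 / r ^ 2)| ≤ C * r ^ (-3 + ε))
    (hV : ∃ C R, ∀ r ≥ R, |V r| ≤ C * r ^ ε) :
    ∃ C R, ∀ r ≥ R,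
      |(u r * (f'' r + (r / (1 + r ^ 2)) * f' r) + 2 * u' r * f' r) *
          (Real.sqrt (1 + u r ^ 2 * ((1 + r ^ 2) * f' r ^ 2 + V r)))⁻¹ -
        (1 / r ^ 2 - (2 * u₀ + 𝒜) / r ^ 3)| ≤ C * r ^ (-4 + ε) :=
  stmt_7_general u₀ 𝒜 ε hε u u' f' f'' V hu hu' hf' hf'' hV
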